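/- arXiv:2102.04336 — 6 statements merged into one kernel-verified Lean document; each statement's English description precedes it below -/
import Mathlib

section
/- For any positive real numbers σ₁, σ₂, σ₃ and any t ≥ 0: sup over ξ ∈ ℝ with |ξ| ≥ 1 of |ξ|^{−σ₁} · e^{−σ₂·t·|ξ|^{−σ₃}} ≤ (1 + σ₁/(σ₂σ₃))^{σ₁/σ₃} · (1 + t)^{−σ₁/σ₃}. -/
open MeasureTheory Real Complex

theorem key_ineq (b y : ℝ) (hb : 0 < b) (hy : 0 ≤ y) :
    1 + y ≤ (1 + b) * Real.exp (y / b) := by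
  have h := Real.add_one_le_exp (y / b)
  have hyb : 0 ≤ y / b := div_nonneg hy hb.le
  have hby : b * (y / b) = y := by field_simp
  nlinarith [Real.exp_pos (y / b)]

theorem stmt_1 (s1 s2 s3 : ℝ) (hs1 : 0 < s1) (hs2 : 0 < s2) (hs3 : 0 < s3) :
    ∀ t : ℝ, 0 ≤ t → ∀ ξ : ℝ, 1 ≤ |ξ| →
      |ξ| ^ (-s1) * Real.exp (-s2 * t * |ξ| ^ (-s3)) ≤
        (1 + s1 / (s2 * s3)) ^ (s1 / s3) * (1 + t) ^ (-(s1 / s3)) := by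
  intro t ht ξ hξ
  set r := |ξ| with hrdef
  have hr0 : (0:ℝ) < r := lt_of_lt_of_le one_pos hξ
  set a := s1 / s3 with ha
  set b := s1 / (s2 * s3) with hb
  have ha0 : 0 < a := div_pos hs1 hs3
  have hb0 : 0 < b := div_pos hs1 (mul_pos hs2 hs3)
  have hab : a = s2 * b := by rw [ha, hb]; field_simp
  set x := r ^ (-s3) with hx
  have hx0 : 0 < x := Real.rpow_pos_of_pos hr0 _
  have hx1 : x ≤ 1 := Real.rpow_le_one_of_one_le_of_nonpos hξ (by linarith)
  have hxa : r ^ (-s1) = x ^ a := by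
    rw [hx, ← Real.rpow_mul hr0.le]
    congr 1
    rw [ha]; field_simp
  have h1 : x * (1 + t) ≤ 1 + t * x := by nlinarith
  have h2 : 1 + t * x ≤ (1 + b) * Real.exp (t * x / b) :=
    key_ineq b (t * x) hb0 (mul_nonneg ht hx0.le)
  have h3 : (x * (1 + t)) ^ a ≤ ((1 + b) * Real.exp (t * x / b)) ^ a :=
    Real.rpow_le_rpow (by positivity) (h1.trans h2) ha0.le
  have h4 : ((1 + b) * Real.exp (t * x / b)) ^ a
      = (1 + b) ^ a * Real.exp (s2 * (t * x)) := by
    rw [Real.mul_rpow (by positivity) (Real.exp_pos _).le, ← Real.exp_mul]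
    congr 1
    rw [hab]; field_simp
  have h5 : x ^ a * (1 + t) ^ a ≤ (1 + b) ^ a * Real.exp (s2 * (t * x)) := by
    rw [← Real.mul_rpow hx0.le (by linarith)]
    rw [h4] at h3; exact h3
  have ht0 : (0:ℝ) < 1 + t := by linarith
  have hexp : Real.exp (-s2 * t * x) = (Real.exp (s2 * (t * x)))⁻¹ := by
    rw [← Real.exp_neg]; ring_nf
  rw [hxa, hexp, Real.rpow_neg ht0.le, ← div_eq_mul_inv, ← div_eq_mul_inv,
    div_le_div_iff₀ (Real.exp_pos _) (Real.rpow_pos_of_pos ht0 a)]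
  exact h5
end

section
/- For every ξ ∈ ℝ and every Fourier-mode solution (with Fourier heat law), the energy t ↦ Ê(ξ,t) is differentiable on [0,∞) and satisfies dÊ/dt (ξ,t) = −k₄·ξ²·|η̂(t)|² for all t ≥ 0; in particular Ê(ξ,·) is nonincreasing. -/
open MeasureTheory Real Complex

lemma my_deriv_normSq {f : ℝ → ℂ} {f' : ℂ} {s : Set ℝ} {t : ℝ}
    (hf : HasDerivWithinAt f f' s t) :
    HasDerivWithinAt (fun x => ‖f x‖^2)
      (2 * ((f t).re * f'.re + (f t).im * f'.im)) s t := by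
  have hre : HasDerivWithinAt (fun x => (f x).re) f'.re s t :=
    Complex.reCLM.hasFDerivAt.comp_hasDerivWithinAt t hf
  have him : HasDerivWithinAt (fun x => (f x).im) f'.im s t :=
    Complex.imCLM.hasFDerivAt.comp_hasDerivWithinAt t hf
  have h := (hre.mul hre).add (him.mul him)
  have heq : (fun x => ‖f x‖^2) = fun x => (f x).re * (f x).re + (f x).im * (f x).im := by
    funext x
    rw [← Complex.normSq_apply, ← Complex.sq_norm]
  rw [heq]
  refine h.congr_deriv ?_
  ring

theorem stmt_2
    (k1 k2 k3 k4 g t1 t2 t3 : ℝ)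
    (hk1 : 0 < k1) (hk2 : 0 < k2) (hk3 : 0 < k3) (hk4 : 0 < k4) (hg : 0 < g)
    (hτ : (t1, t2, t3) = ((1:ℝ), (0:ℝ), (0:ℝ)) ∨ (t1, t2, t3) = ((0:ℝ), (1:ℝ), (0:ℝ)) ∨ (t1, t2, t3) = ((0:ℝ), (0:ℝ), (1:ℝ)))
    (xi : ℝ)
    (V U Z Y Ph Th Et : ℝ → ℂ)
    (hode :
      (∀ t : ℝ, 0 ≤ t → HasDerivWithinAt (V) (Complex.I * (xi:ℂ) * (U) t + (Y) t + (Th) t) (Set.Ici 0) t) ∧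
      (∀ t : ℝ, 0 ≤ t → HasDerivWithinAt (U) (Complex.I * (k1:ℂ) * (xi:ℂ) * (V) t - Complex.I * (t1:ℂ) * (g:ℂ) * (xi:ℂ) * (Et) t) (Set.Ici 0) t) ∧
      (∀ t : ℝ, 0 ≤ t → HasDerivWithinAt (Z) (Complex.I * (xi:ℂ) * (Y) t) (Set.Ici 0) t) ∧
      (∀ t : ℝ, 0 ≤ t → HasDerivWithinAt (Y) (Complex.I * (k2:ℂ) * (xi:ℂ) * (Z) t - (k1:ℂ) * (V) t - Complex.I * (t2:ℂ) * (g:ℂ) * (xi:ℂ) * (Et) t) (Set.Ici 0) t) ∧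
      (∀ t : ℝ, 0 ≤ t → HasDerivWithinAt (Ph) (Complex.I * (xi:ℂ) * (Th) t) (Set.Ici 0) t) ∧
      (∀ t : ℝ, 0 ≤ t → HasDerivWithinAt (Th) (Complex.I * (k3:ℂ) * (xi:ℂ) * (Ph) t - (k1:ℂ) * (V) t - Complex.I * (t3:ℂ) * (g:ℂ) * (xi:ℂ) * (Et) t) (Set.Ici 0) t) ∧
      (∀ t : ℝ, 0 ≤ t → HasDerivWithinAt (Et) (-(k4:ℂ) * (xi:ℂ)^2 * (Et) t - Complex.I * (g:ℂ) * (xi:ℂ) * ((t1:ℂ) * (U) t + (t2:ℂ) * (Y) t + (t3:ℂ) * (Th) t)) (Set.Ici 0) t))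
    : (∀ t : ℝ, 0 ≤ t →
        HasDerivWithinAt (fun s : ℝ => (1/2) * (k1 * ‖V s‖^2 + ‖U s‖^2 + k2 * ‖Z s‖^2 + ‖Y s‖^2 + k3 * ‖Ph s‖^2 + ‖Th s‖^2 + ‖Et s‖^2))
          (-k4 * xi ^ 2 * ‖Et t‖^2) (Set.Ici 0) t) ∧
      AntitoneOn (fun s : ℝ => (1/2) * (k1 * ‖V s‖^2 + ‖U s‖^2 + k2 * ‖Z s‖^2 + ‖Y s‖^2 + k3 * ‖Ph s‖^2 + ‖Th s‖^2 + ‖Et s‖^2)) (Set.Ici 0) := by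
  obtain ⟨h1, h2, h3, h4, h5, h6, h7⟩ := hode
  have key : ∀ t : ℝ, 0 ≤ t →
      HasDerivWithinAt (fun s : ℝ => (1/2) * (k1 * ‖V s‖^2 + ‖U s‖^2 + k2 * ‖Z s‖^2 + ‖Y s‖^2 + k3 * ‖Ph s‖^2 + ‖Th s‖^2 + ‖Et s‖^2))
        (-k4 * xi ^ 2 * ‖Et t‖^2) (Set.Ici 0) t := by
    intro t ht
    have HV := my_deriv_normSq (h1 t ht)
    have HU := my_deriv_normSq (h2 t ht)
    have HZ := my_deriv_normSq (h3 t ht)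
    have HY := my_deriv_normSq (h4 t ht)
    have HPh := my_deriv_normSq (h5 t ht)
    have HTh := my_deriv_normSq (h6 t ht)
    have HEt := my_deriv_normSq (h7 t ht)
    have H := ((((((HV.const_mul k1).add HU).add (HZ.const_mul k2)).add HY).add
      (HPh.const_mul k3)).add HTh).add HEt
    have H2 := H.const_mul ((1:ℝ)/2)
    refine H2.congr_deriv ?_
    have hnorm : ‖Et t‖^2 = (Et t).re * (Et t).re + (Et t).im * (Et t).im := by
      rw [← Complex.normSq_apply, ← Complex.sq_norm]
    rw [hnorm]
    simp only [Complex.add_re, Complex.add_im, Complex.sub_re, Complex.sub_im,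
      Complex.mul_re, Complex.mul_im, Complex.neg_re, Complex.neg_im,
      Complex.I_re, Complex.I_im, Complex.ofReal_re, Complex.ofReal_im,
      Complex.ofReal_pow, pow_two]
    ring
  refine ⟨key, ?_⟩
  have hcont : ContinuousOn (fun s : ℝ => (1/2) * (k1 * ‖V s‖^2 + ‖U s‖^2 + k2 * ‖Z s‖^2 + ‖Y s‖^2 + k3 * ‖Ph s‖^2 + ‖Th s‖^2 + ‖Et s‖^2)) (Set.Ici 0) :=
    fun t ht => (key t ht).continuousWithinAt
  apply antitoneOn_of_deriv_nonpos (convex_Ici 0) hcont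
  · intro x hx
    rw [interior_Ici] at hx
    exact ((key x hx.le).hasDerivAt (Ici_mem_nhds hx)).differentiableAt.differentiableWithinAt
  · intro x hx
    rw [interior_Ici] at hx
    have hd := (key x hx.le).hasDerivAt (Ici_mem_nhds hx)
    rw [hd.deriv]
    have : (0:ℝ) ≤ k4 * xi ^ 2 * ‖Et x‖^2 := by positivity
    nlinarith
end

section
/- For every ξ ∈ ℝ and every Fourier-mode solution (with Cattaneo heat law), the energy t ↦ Ê(ξ,t) is differentiable on [0,∞) and satisfies dÊ/dt (ξ,t) = −k₅·|q̂(t)|² for all t ≥ 0; in particular Ê(ξ,·) is nonincreasing. -/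
open MeasureTheory Real Complex

private lemma normsq_deriv {f : ℝ → ℂ} {f' : ℂ} {t : ℝ}
    (h : HasDerivWithinAt f f' (Set.Ici 0) t) :
    HasDerivWithinAt (fun s => ‖f s‖^2) (2 * (f' * (starRingEnd ℂ) (f t)).re) (Set.Ici 0) t := by
  have := (h.inner ℝ h)
  simp only [real_inner_self_eq_norm_sq] at this
  refine this.congr_deriv ?_
  simp [Complex.inner, Complex.mul_re, Complex.conj_re, Complex.conj_im]
  ring

theorem stmt_3
    (k1 k2 k3 k4 k5 g t1 t2 t3 : ℝ)
    (hk1 : 0 < k1) (hk2 : 0 < k2) (hk3 : 0 < k3) (hk4 : 0 < k4) (hk5 : 0 < k5) (hg : 0 < g)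
    (hτ : (t1, t2, t3) = ((1:ℝ), (0:ℝ), (0:ℝ)) ∨ (t1, t2, t3) = ((0:ℝ), (1:ℝ), (0:ℝ)) ∨ (t1, t2, t3) = ((0:ℝ), (0:ℝ), (1:ℝ)))
    (xi : ℝ)
    (V U Z Y Ph Th Et Q : ℝ → ℂ)
    (hode :
      (∀ t : ℝ, 0 ≤ t → HasDerivWithinAt (V) (Complex.I * (xi:ℂ) * (U) t + (Y) t + (Th) t) (Set.Ici 0) t) ∧
      (∀ t : ℝ, 0 ≤ t → HasDerivWithinAt (U) (Complex.I * (k1:ℂ) * (xi:ℂ) * (V) t - Complex.I * (t1:ℂ) * (g:ℂ) * (xi:ℂ) * (Et) t) (Set.Ici 0) t) ∧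
      (∀ t : ℝ, 0 ≤ t → HasDerivWithinAt (Z) (Complex.I * (xi:ℂ) * (Y) t) (Set.Ici 0) t) ∧
      (∀ t : ℝ, 0 ≤ t → HasDerivWithinAt (Y) (Complex.I * (k2:ℂ) * (xi:ℂ) * (Z) t - (k1:ℂ) * (V) t - Complex.I * (t2:ℂ) * (g:ℂ) * (xi:ℂ) * (Et) t) (Set.Ici 0) t) ∧
      (∀ t : ℝ, 0 ≤ t → HasDerivWithinAt (Ph) (Complex.I * (xi:ℂ) * (Th) t) (Set.Ici 0) t) ∧
      (∀ t : ℝ, 0 ≤ t → HasDerivWithinAt (Th) (Complex.I * (k3:ℂ) * (xi:ℂ) * (Ph) t - (k1:ℂ) * (V) t - Complex.I * (t3:ℂ) * (g:ℂ) * (xi:ℂ) * (Et) t) (Set.Ici 0) t) ∧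
      (∀ t : ℝ, 0 ≤ t → HasDerivWithinAt (Et) (-Complex.I * (k4:ℂ) * (xi:ℂ) * (Q) t - Complex.I * (g:ℂ) * (xi:ℂ) * ((t1:ℂ) * (U) t + (t2:ℂ) * (Y) t + (t3:ℂ) * (Th) t)) (Set.Ici 0) t) ∧
      (∀ t : ℝ, 0 ≤ t → HasDerivWithinAt (Q) (-(k5:ℂ) * (Q) t - Complex.I * (k4:ℂ) * (xi:ℂ) * (Et) t) (Set.Ici 0) t))
    : (∀ t : ℝ, 0 ≤ t →
        HasDerivWithinAt (fun s : ℝ => (1/2) * (k1 * ‖V s‖^2 + ‖U s‖^2 + k2 * ‖Z s‖^2 + ‖Y s‖^2 + k3 * ‖Ph s‖^2 + ‖Th s‖^2 + ‖Et s‖^2 + ‖Q s‖^2))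
          (-k5 * ‖Q t‖^2) (Set.Ici 0) t) ∧
      AntitoneOn (fun s : ℝ => (1/2) * (k1 * ‖V s‖^2 + ‖U s‖^2 + k2 * ‖Z s‖^2 + ‖Y s‖^2 + k3 * ‖Ph s‖^2 + ‖Th s‖^2 + ‖Et s‖^2 + ‖Q s‖^2)) (Set.Ici 0) := by
  obtain ⟨hV, hU, hZ, hY, hPh, hTh, hEt, hQ⟩ := hode
  have hE : ∀ t : ℝ, 0 ≤ t →
      HasDerivWithinAt (fun s : ℝ => (1/2) * (k1 * ‖V s‖^2 + ‖U s‖^2 + k2 * ‖Z s‖^2 + ‖Y s‖^2 + k3 * ‖Ph s‖^2 + ‖Th s‖^2 + ‖Et s‖^2 + ‖Q s‖^2))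
        (-k5 * ‖Q t‖^2) (Set.Ici 0) t := by
    intro t ht
    have h := ((((((((normsq_deriv (hV t ht)).const_mul k1).add
      (normsq_deriv (hU t ht))).add ((normsq_deriv (hZ t ht)).const_mul k2)).add
      (normsq_deriv (hY t ht))).add ((normsq_deriv (hPh t ht)).const_mul k3)).add
      (normsq_deriv (hTh t ht))).add (normsq_deriv (hEt t ht))).add
      (normsq_deriv (hQ t ht))
    have h2 := h.const_mul (1/2 : ℝ)
    refine h2.congr_deriv ?_
    have hq : ‖Q t‖^2 = (Q t).re^2 + (Q t).im^2 := by
      rw [Complex.sq_norm, Complex.normSq_apply]; ring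
    rw [hq]
    simp only [Complex.add_re, Complex.sub_re, Complex.mul_re, Complex.mul_im,
      Complex.add_im, Complex.sub_im, Complex.I_re, Complex.I_im, Complex.ofReal_re,
      Complex.ofReal_im, Complex.conj_re, Complex.conj_im, Complex.neg_re, Complex.neg_im]
    ring
  refine ⟨hE, ?_⟩
  have hcont : ContinuousOn (fun s : ℝ => (1/2) * (k1 * ‖V s‖^2 + ‖U s‖^2 + k2 * ‖Z s‖^2 + ‖Y s‖^2 + k3 * ‖Ph s‖^2 + ‖Th s‖^2 + ‖Et s‖^2 + ‖Q s‖^2)) (Set.Ici 0) :=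
    fun t ht => (hE t ht).continuousWithinAt
  apply antitoneOn_of_deriv_nonpos (convex_Ici 0) hcont
  · intro x hx
    rw [interior_Ici] at hx
    exact ((hE x (le_of_lt hx)).hasDerivAt (Ici_mem_nhds hx)).differentiableAt.differentiableWithinAt
  · intro x hx
    rw [interior_Ici] at hx
    rw [((hE x (le_of_lt hx)).hasDerivAt (Ici_mem_nhds hx)).deriv]
    have : (0:ℝ) ≤ ‖Q x‖^2 := sq_nonneg _
    nlinarith
end

section
/- Assume (τ₁, τ₂, τ₃) = (1,0,0) and k₂ = k₃. Then for every ξ ∈ ℝ there exists a Fourier-mode solution (with Fourier heat law) with Û(ξ,0) ≠ 0 and |Û(ξ,t)| = |Û(ξ,0)| for all t ≥ 0; in particular |Û(ξ,t)| does not converge to 0 as t → ∞. -/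
open MeasureTheory Real Complex

theorem stmt_6
    (k1 k2 k3 k4 g t1 t2 t3 : ℝ)
    (hk1 : 0 < k1) (hk2 : 0 < k2) (hk3 : 0 < k3) (hk4 : 0 < k4) (hg : 0 < g)
    (hτ : (t1, t2, t3) = ((1:ℝ), (0:ℝ), (0:ℝ)))
    (hk23 : k2 = k3)
    : ∀ xi : ℝ, ∃ V U Z Y Ph Th Et : ℝ → ℂ,
      (∀ t : ℝ, 0 ≤ t → HasDerivWithinAt (V) (Complex.I * (xi:ℂ) * (U) t + (Y) t + (Th) t) (Set.Ici 0) t) ∧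
      (∀ t : ℝ, 0 ≤ t → HasDerivWithinAt (U) (Complex.I * (k1:ℂ) * (xi:ℂ) * (V) t - Complex.I * (t1:ℂ) * (g:ℂ) * (xi:ℂ) * (Et) t) (Set.Ici 0) t) ∧
      (∀ t : ℝ, 0 ≤ t → HasDerivWithinAt (Z) (Complex.I * (xi:ℂ) * (Y) t) (Set.Ici 0) t) ∧
      (∀ t : ℝ, 0 ≤ t → HasDerivWithinAt (Y) (Complex.I * (k2:ℂ) * (xi:ℂ) * (Z) t - (k1:ℂ) * (V) t - Complex.I * (t2:ℂ) * (g:ℂ) * (xi:ℂ) * (Et) t) (Set.Ici 0) t) ∧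
      (∀ t : ℝ, 0 ≤ t → HasDerivWithinAt (Ph) (Complex.I * (xi:ℂ) * (Th) t) (Set.Ici 0) t) ∧
      (∀ t : ℝ, 0 ≤ t → HasDerivWithinAt (Th) (Complex.I * (k3:ℂ) * (xi:ℂ) * (Ph) t - (k1:ℂ) * (V) t - Complex.I * (t3:ℂ) * (g:ℂ) * (xi:ℂ) * (Et) t) (Set.Ici 0) t) ∧
      (∀ t : ℝ, 0 ≤ t → HasDerivWithinAt (Et) (-(k4:ℂ) * (xi:ℂ)^2 * (Et) t - Complex.I * (g:ℂ) * (xi:ℂ) * ((t1:ℂ) * (U) t + (t2:ℂ) * (Y) t + (t3:ℂ) * (Th) t)) (Set.Ici 0) t) ∧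
      (V 0, U 0, Z 0, Y 0, Ph 0, Th 0, Et 0) ≠ ((0, 0, 0, 0, 0, 0, 0) : ℂ × ℂ × ℂ × ℂ × ℂ × ℂ × ℂ) ∧
      ∀ t : ℝ, 0 ≤ t → Real.sqrt (‖V t‖^2 + ‖U t‖^2 + ‖Z t‖^2 + ‖Y t‖^2 + ‖Ph t‖^2 + ‖Th t‖^2 + ‖Et t‖^2) = Real.sqrt (‖V 0‖^2 + ‖U 0‖^2 + ‖Z 0‖^2 + ‖Y 0‖^2 + ‖Ph 0‖^2 + ‖Th 0‖^2 + ‖Et 0‖^2) := by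
  intro xi
  obtain ⟨ht1, ht2, ht3⟩ : t1 = 1 ∧ t2 = 0 ∧ t3 = 0 := by
    simpa [Prod.ext_iff] using hτ
  subst ht1 ht2 ht3 hk23
  set r : ℝ := Real.sqrt k2 with hr
  set c : ℂ := Complex.I * (r * xi : ℝ) with hc
  set f : ℝ → ℂ := fun t => Complex.exp (c * t) with hfdef
  have hf : ∀ t : ℝ, HasDerivAt f (c * f t) t := by
    intro t
    have hlin : HasDerivAt (fun s : ℝ => ((s : ℂ))) 1 t := by
      simpa using (hasDerivAt_id t).ofReal_comp
    have h := (hlin.const_mul c).cexp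
    simp only [hfdef]
    convert h using 1
    ring
  have hrr : (r : ℂ) * (r : ℂ) = (k2 : ℂ) := by
    rw [← Complex.ofReal_mul, hr, Real.mul_self_sqrt hk2.le]
  have hnf : ∀ t : ℝ, ‖f t‖ = 1 := by
    intro t
    rw [hfdef]
    simp only [Complex.norm_exp]
    have : (c *t).re = 0 := by
      simp [hc, Complex.mul_re]
    rw [this, Real.exp_zero]
  refine ⟨fun _ => 0, fun _ => 0, fun t => -f t, fun t => -((r : ℂ) * f t), f,
    fun t => (r : ℂ) * f t, fun _ => 0, ?_, ?_, ?_, ?_, ?_, ?_, ?_, ?_, ?_⟩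
  · intro t ht
    have := (hasDerivAt_const t (0 : ℂ)).hasDerivWithinAt (s := Set.Ici 0)
    convert this using 1
    · rfl
    ring
  · intro t ht
    have := (hasDerivAt_const t (0 : ℂ)).hasDerivWithinAt (s := Set.Ici 0)
    convert this using 1
    · rfl
    ring
  · intro t ht
    have := ((hf t).neg).hasDerivWithinAt (s := Set.Ici 0)
    convert this using 1
    · rfl
    · rfl
    rw [hc]
    push_cast
    ring
  · intro t ht
    have := (((hf t).const_mul (r : ℂ)).neg).hasDerivWithinAt (s := Set.Ici 0)
    convert this using 1
    · rfl
    · rfl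
    rw [hc]
    push_cast
    rw [← hrr]
    ring
  · intro t ht
    have := (hf t).hasDerivWithinAt (s := Set.Ici 0)
    convert this using 1
    · rfl
    rw [hc]
    push_cast
    ring
  · intro t ht
    have := ((hf t).const_mul (r : ℂ)).hasDerivWithinAt (s := Set.Ici 0)
    convert this using 1
    · rfl
    rw [hc]
    push_cast
    rw [← hrr]
    ring
  · intro t ht
    have := (hasDerivAt_const t (0 : ℂ)).hasDerivWithinAt (s := Set.Ici 0)
    convert this using 1
    · rfl
    ring
  · intro h
    have h5 : f 0 = 0 := by
      have := congrArg (fun p : ℂ × ℂ × ℂ × ℂ × ℂ × ℂ × ℂ => p.2.2.2.2.1) h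
      simpa using this
    have : ‖f 0‖ = 1 := hnf 0
    rw [h5] at this
    simp at this
  · intro t ht
    have hft : ‖f t‖ = 1 := hnf t
    have hf0 : ‖f 0‖ = 1 := hnf 0
    have hAt : ∀ s : ℝ, ‖-((r : ℂ) * f s)‖ = r := by
      intro s
      rw [norm_neg, norm_mul, hnf s, Complex.norm_real, Real.norm_eq_abs,
        _root_.abs_of_nonneg (Real.sqrt_nonneg k2), mul_one]
    have hBt : ∀ s : ℝ, ‖(r : ℂ) * f s‖ = r := by
      intro s
      rw [norm_mul, hnf s, Complex.norm_real, Real.norm_eq_abs,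
        _root_.abs_of_nonneg (Real.sqrt_nonneg k2), mul_one]
    rw [hft, hf0, hAt t, hAt 0, hBt t, hBt 0, norm_neg, norm_neg, hft, hf0]
end

section
/- Assume (τ₁, τ₂, τ₃) = (1,0,0) and k₂ = k₃. Then for every ξ ∈ ℝ there exists a Fourier-mode solution (with Cattaneo heat law) with Û(ξ,0) ≠ 0 and |Û(ξ,t)| = |Û(ξ,0)| for all t ≥ 0; in particular |Û(ξ,t)| does not converge to 0 as t → ∞. -/
open MeasureTheory Real Complex

theorem stmt_13
    (k1 k2 k3 k4 k5 g t1 t2 t3 : ℝ)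
    (hk1 : 0 < k1) (hk2 : 0 < k2) (hk3 : 0 < k3) (hk4 : 0 < k4) (hk5 : 0 < k5) (hg : 0 < g)
    (hτ : (t1, t2, t3) = ((1:ℝ), (0:ℝ), (0:ℝ)))
    (hk23 : k2 = k3)
    : ∀ xi : ℝ, ∃ V U Z Y Ph Th Et Q : ℝ → ℂ,
      (∀ t : ℝ, 0 ≤ t → HasDerivWithinAt (V) (Complex.I * (xi:ℂ) * (U) t + (Y) t + (Th) t) (Set.Ici 0) t) ∧
      (∀ t : ℝ, 0 ≤ t → HasDerivWithinAt (U) (Complex.I * (k1:ℂ) * (xi:ℂ) * (V) t - Complex.I * (t1:ℂ) * (g:ℂ) * (xi:ℂ) * (Et) t) (Set.Ici 0) t) ∧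
      (∀ t : ℝ, 0 ≤ t → HasDerivWithinAt (Z) (Complex.I * (xi:ℂ) * (Y) t) (Set.Ici 0) t) ∧
      (∀ t : ℝ, 0 ≤ t → HasDerivWithinAt (Y) (Complex.I * (k2:ℂ) * (xi:ℂ) * (Z) t - (k1:ℂ) * (V) t - Complex.I * (t2:ℂ) * (g:ℂ) * (xi:ℂ) * (Et) t) (Set.Ici 0) t) ∧
      (∀ t : ℝ, 0 ≤ t → HasDerivWithinAt (Ph) (Complex.I * (xi:ℂ) * (Th) t) (Set.Ici 0) t) ∧
      (∀ t : ℝ, 0 ≤ t → HasDerivWithinAt (Th) (Complex.I * (k3:ℂ) * (xi:ℂ) * (Ph) t - (k1:ℂ) * (V) t - Complex.I * (t3:ℂ) * (g:ℂ) * (xi:ℂ) * (Et) t) (Set.Ici 0) t) ∧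
      (∀ t : ℝ, 0 ≤ t → HasDerivWithinAt (Et) (-Complex.I * (k4:ℂ) * (xi:ℂ) * (Q) t - Complex.I * (g:ℂ) * (xi:ℂ) * ((t1:ℂ) * (U) t + (t2:ℂ) * (Y) t + (t3:ℂ) * (Th) t)) (Set.Ici 0) t) ∧
      (∀ t : ℝ, 0 ≤ t → HasDerivWithinAt (Q) (-(k5:ℂ) * (Q) t - Complex.I * (k4:ℂ) * (xi:ℂ) * (Et) t) (Set.Ici 0) t) ∧
      (V 0, U 0, Z 0, Y 0, Ph 0, Th 0, Et 0, Q 0) ≠ ((0, 0, 0, 0, 0, 0, 0, 0) : ℂ × ℂ × ℂ × ℂ × ℂ × ℂ × ℂ × ℂ) ∧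
      ∀ t : ℝ, 0 ≤ t → Real.sqrt (‖V t‖^2 + ‖U t‖^2 + ‖Z t‖^2 + ‖Y t‖^2 + ‖Ph t‖^2 + ‖Th t‖^2 + ‖Et t‖^2 + ‖Q t‖^2) = Real.sqrt (‖V 0‖^2 + ‖U 0‖^2 + ‖Z 0‖^2 + ‖Y 0‖^2 + ‖Ph 0‖^2 + ‖Th 0‖^2 + ‖Et 0‖^2 + ‖Q 0‖^2) := by
  obtain ⟨h1, h2, h3⟩ : t1 = 1 ∧ t2 = 0 ∧ t3 = 0 := by
    simpa [Prod.ext_iff] using hτ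
  subst h1 h2 h3 hk23
  intro xi
  set r : ℝ := Real.sqrt k2 * xi with hr
  set c : ℝ → ℂ := fun t => Complex.exp ((r * t : ℝ) * Complex.I) with hc
  have hsq : ((Real.sqrt k2 : ℂ) * (Real.sqrt k2 : ℂ)) = (k2 : ℂ) := by
    rw [← Complex.ofReal_mul, Real.mul_self_sqrt hk2.le]
  have hderiv : ∀ t : ℝ, HasDerivAt c ((r : ℂ) * Complex.I * c t) t := by
    intro t
    have h1 : HasDerivAt (fun t : ℝ => ((r * t : ℝ) : ℂ)) (r : ℂ) t := by
      simpa using ((hasDerivAt_id t).const_mul r).ofReal_comp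
    have := (h1.mul_const Complex.I).cexp
    rw [hc]
    convert this using 1 <;> push_cast <;> ring
  have hnorm : ∀ t : ℝ, ‖c t‖ = 1 := by
    intro t
    rw [hc]
    show ‖Complex.exp ((r*t:ℝ) * Complex.I)‖ = 1
    exact Complex.norm_exp_ofReal_mul_I _
  refine ⟨fun _ => 0, fun _ => 0, c, fun t => (Real.sqrt k2 : ℂ) * c t,
    fun t => -c t, fun t => -((Real.sqrt k2 : ℂ) * c t), fun _ => 0, fun _ => 0,
    ?_, ?_, ?_, ?_, ?_, ?_, ?_, ?_, ?_, ?_⟩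
  · intro t _
    have : HasDerivWithinAt (fun _ : ℝ => (0:ℂ)) 0 (Set.Ici 0) t := (hasDerivAt_const t 0).hasDerivWithinAt
    convert this using 1; ring
  · intro t _
    have : HasDerivWithinAt (fun _ : ℝ => (0:ℂ)) 0 (Set.Ici 0) t := (hasDerivAt_const t 0).hasDerivWithinAt
    convert this using 1; ring
  · intro t _
    have : HasDerivWithinAt c ((r:ℂ)*Complex.I*c t) (Set.Ici 0) t := (hderiv t).hasDerivWithinAt
    convert this using 1
    rw [hr]; push_cast; ring
  · intro t _
    have : HasDerivWithinAt (fun s => (Real.sqrt k2 : ℂ) * c s) ((Real.sqrt k2 : ℂ) * ((r:ℂ)*Complex.I*c t)) (Set.Ici 0) t := ((hderiv t).const_mul _).hasDerivWithinAt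
    convert this using 1
    rw [hr]
    push_cast
    rw [show (Complex.I * ↑k2 * ↑xi * c t - ↑k1 * 0 - Complex.I * 0 * ↑g * ↑xi * 0 : ℂ)
      = Complex.I * ((Real.sqrt k2 : ℂ) * (Real.sqrt k2 : ℂ)) * ↑xi * c t by rw [hsq]; ring]
    ring
  · intro t _
    have : HasDerivWithinAt (fun s => -c s) (-((r:ℂ)*Complex.I*c t)) (Set.Ici 0) t := ((hderiv t).neg).hasDerivWithinAt
    convert this using 1
    rw [hr]; push_cast; ring
  · intro t _
    have : HasDerivWithinAt (fun s => -((Real.sqrt k2 : ℂ) * c s)) (-((Real.sqrt k2 : ℂ) * ((r:ℂ)*Complex.I*c t))) (Set.Ici 0) t := (((hderiv t).const_mul _).neg).hasDerivWithinAt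
    convert this using 1
    rw [hr]
    push_cast
    rw [show (Complex.I * ↑k2 * ↑xi * (-c t) - ↑k1 * 0 - Complex.I * 0 * ↑g * ↑xi * 0 : ℂ)
      = Complex.I * ((Real.sqrt k2 : ℂ) * (Real.sqrt k2 : ℂ)) * ↑xi * (-c t) by rw [hsq]; ring]
    ring
  · intro t _
    have : HasDerivWithinAt (fun _ : ℝ => (0:ℂ)) 0 (Set.Ici 0) t := (hasDerivAt_const t 0).hasDerivWithinAt
    convert this using 1; push_cast; ring
  · intro t _
    have : HasDerivWithinAt (fun _ : ℝ => (0:ℂ)) 0 (Set.Ici 0) t := (hasDerivAt_const t 0).hasDerivWithinAt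
    convert this using 1; ring
  · have hc0 : c 0 = 1 := by simp [hc]
    simp [Prod.ext_iff, hc0]
  · intro t _
    have h1 := hnorm t
    have h0 := hnorm 0
    have hY : ∀ s : ℝ, ‖(Real.sqrt k2 : ℂ) * c s‖ = Real.sqrt k2 := by
      intro s
      rw [norm_mul, hnorm s, mul_one, Complex.norm_real, Real.norm_eq_abs,
        _root_.abs_of_nonneg (Real.sqrt_nonneg k2)]
    simp [h1, h0, hY, norm_neg]
end

section
/- Let k₁, k₂, k₄, γ > 0 and ξ ∈ ℝ, and let A(ξ) be the 7×7 complex matrix defined in the context. Then A(ξ) has a nonzero purely imaginary eigenvalue: if ξ ≠ 0 then det(i·√k₂·ξ·I − A(ξ)) = 0, and if ξ = 0 then det(i·√(2k₁)·I − A(0)) = 0. In particular, for every ξ ∈ ℝ there exists λ ∈ ℂ with Re λ = 0, Im λ ≠ 0 and det(λ·I − A(ξ)) = 0. -/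
open MeasureTheory Real Complex

noncomputable def genMatrix (k1 k2 k4 g xi : ℝ) : Matrix (Fin 7) (Fin 7) ℂ :=
  !![0, Complex.I * (xi:ℂ), 0, 1, 0, 1, 0;
     Complex.I * (k1:ℂ) * (xi:ℂ), 0, 0, 0, 0, 0, -Complex.I * (g:ℂ) * (xi:ℂ);
     0, 0, 0, Complex.I * (xi:ℂ), 0, 0, 0;
     -(k1:ℂ), 0, Complex.I * (k2:ℂ) * (xi:ℂ), 0, 0, 0, 0;
     0, 0, 0, 0, 0, Complex.I * (xi:ℂ), 0;
     -(k1:ℂ), 0, 0, 0, Complex.I * (k2:ℂ) * (xi:ℂ), 0, 0;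
     0, -Complex.I * (g:ℂ) * (xi:ℂ), 0, 0, 0, 0, -(k4:ℂ) * (xi:ℂ)^2]

lemma fc6 {α : Type*} (x0 x1 x2 : α) (u : Fin 3 → α) :
    (Fin.cons x0 (Fin.cons x1 (Fin.cons x2 u)) : Fin 6 → α) 2 = x2 := rfl
lemma fc5 {α : Type*} (x0 x1 x2 : α) (u : Fin 2 → α) :
    (Fin.cons x0 (Fin.cons x1 (Fin.cons x2 u)) : Fin 5 → α) 2 = x2 := rfl
lemma fc4 {α : Type*} (x0 x1 x2 : α) (u : Fin 1 → α) :
    (Fin.cons x0 (Fin.cons x1 (Fin.cons x2 u)) : Fin 4 → α) 2 = x2 := rfl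
lemma fc3 {α : Type*} (x0 x1 x2 : α) (u : Fin 0 → α) :
    (Fin.cons x0 (Fin.cons x1 (Fin.cons x2 u)) : Fin 3 → α) 2 = x2 := rfl
lemma fc7 {α : Type*} (x0 x1 x2 : α) (u : Fin 4 → α) :
    (Fin.cons x0 (Fin.cons x1 (Fin.cons x2 u)) : Fin 7 → α) 2 = x2 := rfl

lemma aux1 (k1 k2 k4 g xi : ℝ) (hk2 : 0 < k2) :
    Matrix.det ((Complex.I * (Real.sqrt k2 : ℂ) * (xi:ℂ)) • (1 : Matrix (Fin 7) (Fin 7) ℂ)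
        - genMatrix k1 k2 k4 g xi) = 0 := by
  have hs : ((Real.sqrt k2 : ℝ) : ℂ) ≠ 0 := by
    exact_mod_cast (Real.sqrt_pos.mpr hk2).ne'
  have hsq : ((Real.sqrt k2 : ℝ) : ℂ) * ((Real.sqrt k2 : ℝ) : ℂ) = (k2 : ℂ) := by
    exact_mod_cast congrArg (Complex.ofReal ·) (Real.mul_self_sqrt hk2.le)
  rw [← Matrix.exists_mulVec_eq_zero_iff]
  refine ⟨![0, 0, ((Real.sqrt k2 : ℝ) : ℂ)⁻¹, 1, -((Real.sqrt k2 : ℝ) : ℂ)⁻¹, -1, 0], ?_, ?_⟩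
  · intro h
    have := congrFun h 3
    simp at this
  · rw [Matrix.sub_mulVec, Matrix.smul_mulVec, Matrix.one_mulVec, sub_eq_zero]
    simp only [genMatrix, Matrix.cons_mulVec, Matrix.cons_dotProduct,
      Matrix.dotProduct_of_isEmpty, Matrix.empty_mulVec, Matrix.smul_cons, Matrix.smul_empty,
      smul_eq_mul]
    simp only [Fin.cons_inj, Matrix.vecCons]
    norm_num [Matrix.vecHead, Matrix.vecTail, Fin.cons_zero, Fin.cons_succ, Function.comp, fc3, fc4, fc5, fc6, fc7, Matrix.cons_val_two, Matrix.cons_val_one, Matrix.cons_val_zero]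
    and_intros
    all_goals try field_simp
    all_goals try ring
    all_goals linear_combination (xi:ℂ) * hsq

lemma aux2 (k1 k2 k4 g : ℝ) (hk1 : 0 < k1) :
    Matrix.det ((Complex.I * (Real.sqrt (2*k1) : ℂ)) • (1 : Matrix (Fin 7) (Fin 7) ℂ)
        - genMatrix k1 k2 k4 g 0) = 0 := by
  have h2 : (0:ℝ) < 2 * k1 := by linarith
  have hs : ((Real.sqrt (2*k1) : ℝ) : ℂ) ≠ 0 := by
    exact_mod_cast (Real.sqrt_pos.mpr h2).ne'
  have hsq : ((Real.sqrt (2*k1) : ℝ) : ℂ) * ((Real.sqrt (2*k1) : ℝ) : ℂ) = ((2*k1 : ℝ) : ℂ) := by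
    exact_mod_cast congrArg (Complex.ofReal ·) (Real.mul_self_sqrt h2.le)
  rw [← Matrix.exists_mulVec_eq_zero_iff]
  set s : ℂ := ((Real.sqrt (2*k1) : ℝ) : ℂ) with hsdef
  refine ⟨![1, 0, 0, -(k1:ℂ)/(Complex.I * s), 0, -(k1:ℂ)/(Complex.I * s), 0], ?_, ?_⟩
  · intro h
    have := congrFun h 0
    simp at this
  · rw [Matrix.sub_mulVec, Matrix.smul_mulVec, Matrix.one_mulVec, sub_eq_zero]
    simp only [genMatrix, Matrix.cons_mulVec, Matrix.cons_dotProduct,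
      Matrix.dotProduct_of_isEmpty, Matrix.empty_mulVec, Matrix.smul_cons, Matrix.smul_empty,
      smul_eq_mul]
    simp only [Fin.cons_inj, Matrix.vecCons]
    norm_num [Matrix.vecHead, Matrix.vecTail, Fin.cons_zero, Fin.cons_succ, Function.comp, fc3, fc4, fc5, fc6, fc7, Matrix.cons_val_two, Matrix.cons_val_one, Matrix.cons_val_zero]
    push_cast at hsq
    have hI : Complex.I * Complex.I = -1 := Complex.I_mul_I
    and_intros
    all_goals try field_simp
    all_goals try ring
    all_goals linear_combination (-1 : ℂ) * hsq + s^2 * hI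

theorem stmt_18 (k1 k2 k4 g xi : ℝ)
    (hk1 : 0 < k1) (hk2 : 0 < k2) (hk4 : 0 < k4) (hg : 0 < g) :
    (xi ≠ 0 →
      Matrix.det ((Complex.I * (Real.sqrt k2 : ℂ) * (xi:ℂ)) • (1 : Matrix (Fin 7) (Fin 7) ℂ)
        - genMatrix k1 k2 k4 g xi) = 0) ∧
    (xi = 0 →
      Matrix.det ((Complex.I * (Real.sqrt (2 * k1) : ℂ)) • (1 : Matrix (Fin 7) (Fin 7) ℂ)
        - genMatrix k1 k2 k4 g xi) = 0) ∧
    (∃ lam : ℂ, lam.re = 0 ∧ lam.im ≠ 0 ∧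
      Matrix.det (lam • (1 : Matrix (Fin 7) (Fin 7) ℂ) - genMatrix k1 k2 k4 g xi) = 0) := by
  refine ⟨fun _ => aux1 k1 k2 k4 g xi hk2, fun hx => by subst hx; exact aux2 k1 k2 k4 g hk1, ?_⟩
  by_cases hx : xi = 0
  · refine ⟨Complex.I * (Real.sqrt (2 * k1) : ℂ), by simp, ?_, by subst hx; exact aux2 k1 k2 k4 g hk1⟩
    simp only [Complex.mul_im, Complex.I_re, Complex.I_im, Complex.ofReal_re, Complex.ofReal_im]
    have : (0:ℝ) < Real.sqrt (2 * k1) := Real.sqrt_pos.mpr (by linarith)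
    simpa using this.ne'
  · refine ⟨Complex.I * (Real.sqrt k2 : ℂ) * (xi:ℂ), by simp, ?_, aux1 k1 k2 k4 g xi hk2⟩
    have h1 : Real.sqrt k2 ≠ 0 := (Real.sqrt_pos.mpr hk2).ne'
    simp [Complex.mul_im, Complex.mul_re, h1, hx]
end
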